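/- Every closed System T term t of type (ι ⇒ ι) ⇒ ι denotes a continuous function: for every α : ℕ → ℕ there exists m : ℕ such that for all β : ℕ → ℕ agreeing with α on the first m values, ⟦t⟧ α = ⟦t⟧ β. -/

import Mathlib

inductive Dialogue (I O X : Type) : Type
  | eta : X → Dialogue I O X
  | beta : (O → Dialogue I O X) → I → Dialogue I O X

def dialogue {I O X : Type} : Dialogue I O X → (I → O) → X
  | .eta x, _ => x
  | .beta φ i, α => dialogue (φ (α i)) α

def kleisli {I O X Y : Type} (f : X → Dialogue I O Y) : Dialogue I O X → Dialogue I O Y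
  | .eta x => f x
  | .beta φ i => .beta (fun o => kleisli f (φ o)) i

inductive Ty : Type
  | iota
  | arr : Ty → Ty → Ty

inductive Var : List Ty → Ty → Type
  | vz {Γ σ} : Var (σ :: Γ) σ
  | vs {Γ σ τ} : Var Γ σ → Var (τ :: Γ) σ

inductive Tm : List Ty → Ty → Type
  | var {Γ σ} : Var Γ σ → Tm Γ σ
  | zero {Γ} : Tm Γ .iota
  | succ {Γ} : Tm Γ .iota → Tm Γ .iota
  | recn {Γ σ} : Tm Γ (.arr .iota (.arr σ σ)) → Tm Γ σ → Tm Γ .iota → Tm Γ σ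
  | lam {Γ σ τ} : Tm (σ :: Γ) τ → Tm Γ (.arr σ τ)
  | app {Γ σ τ} : Tm Γ (.arr σ τ) → Tm Γ σ → Tm Γ τ

def natrec {X : Type} (f : ℕ → X → X) (x : X) : ℕ → X
  | 0 => x
  | n + 1 => f n (natrec f x n)

def Ty.set : Ty → Type
  | .iota => ℕ
  | .arr σ τ => σ.set → τ.set

def Env : List Ty → Type
  | [] => Unit
  | σ :: Γ => σ.set × Env Γ

def Var.eval : ∀ {Γ σ}, Var Γ σ → Env Γ → σ.set
  | _, _, .vz, γ => γ.1
  | _, _, .vs v, γ => v.eval γ.2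

def Tm.eval : ∀ {Γ σ}, Tm Γ σ → Env Γ → σ.set
  | _, _, .var v, γ => v.eval γ
  | _, _, .zero, _ => (0 : ℕ)
  | _, _, .succ t, γ => Nat.succ (Tm.eval t γ)
  | _, _, .recn f x n, γ => natrec (Tm.eval f γ) (Tm.eval x γ) (Tm.eval n γ)
  | _, _, .lam t, γ => fun x => Tm.eval t (x, γ)
  | _, _, .app t u, γ => Tm.eval t γ (Tm.eval u γ)

def Ty.dial : Ty → Type
  | .iota => Dialogue ℕ ℕ ℕ
  | .arr σ τ => σ.dial → τ.dial

def gk : ∀ σ : Ty, (ℕ → σ.dial) → Dialogue ℕ ℕ ℕ → σ.dial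
  | .iota, f, d => kleisli f d
  | .arr _ σ₂, f, d => fun s => gk σ₂ (fun x => f x s) d

def DEnv : List Ty → Type
  | [] => Unit
  | σ :: Γ => σ.dial × DEnv Γ

def Var.dial : ∀ {Γ σ}, Var Γ σ → DEnv Γ → σ.dial
  | _, _, .vz, γ => γ.1
  | _, _, .vs v, γ => v.dial γ.2

def Tm.dial : ∀ {Γ σ}, Tm Γ σ → DEnv Γ → σ.dial
  | _, _, .var v, γ => v.dial γ
  | _, _, .zero, _ => .eta 0
  | _, _, .succ t, γ => kleisli (fun n => .eta (n + 1)) (Tm.dial t γ)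
  | _, _, .recn f x n, γ =>
      gk _ (natrec (fun k => Tm.dial f γ (.eta k)) (Tm.dial x γ)) (Tm.dial n γ)
  | _, _, .lam t, γ => fun x => Tm.dial t (x, γ)
  | _, _, .app t u, γ => Tm.dial t γ (Tm.dial u γ)

def generic : Dialogue ℕ ℕ ℕ → Dialogue ℕ ℕ ℕ :=
  kleisli (fun n => .beta .eta n)

def dtree (t : Tm [] (.arr (.arr .iota .iota) .iota)) : Dialogue ℕ ℕ ℕ :=
  Tm.dial t () generic


def TRel : ∀ σ : Ty, ((ℕ → ℕ) → σ.set) → σ.dial → Prop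
  | .iota, f, d => ∀ α, f α = dialogue d α
  | .arr σ τ, f, g => ∀ x x', TRel σ x x' → TRel τ (fun α => f α (x α)) (g x')

def TREnv : ∀ Γ : List Ty, ((ℕ → ℕ) → Env Γ) → DEnv Γ → Prop
  | [], _, _ => True
  | σ :: Γ, γ, γ' => TRel σ (fun α => (γ α).1) γ'.1 ∧ TREnv Γ (fun α => (γ α).2) γ'.2

theorem dialogue_kleisli {X Y : Type} (f : X → Dialogue ℕ ℕ Y)
    (d : Dialogue ℕ ℕ X) (α : ℕ → ℕ) :
    dialogue (kleisli f d) α = dialogue (f (dialogue d α)) α := by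
  induction d with
  | eta x => rfl
  | beta φ i ih => exact ih _

theorem gk_rel : ∀ (σ : Ty) (F : (ℕ → ℕ) → ℕ → σ.set) (f : ℕ → σ.dial),
    (∀ k, TRel σ (fun α => F α k) (f k)) →
    ∀ (n : (ℕ → ℕ) → ℕ) (d : Dialogue ℕ ℕ ℕ), (∀ α, n α = dialogue d α) →
    TRel σ (fun α => F α (n α)) (gk σ f d)
  | .iota, F, f, hf, n, d, hn => by
      intro α
      show F α (n α) = dialogue (kleisli f d) α
      erw [dialogue_kleisli, ← hn α]
      exact hf (n α) α
  | .arr σ τ, F, f, hf, n, d, hn => by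
      intro x x' hx
      exact gk_rel τ (fun α k => F α k (x α)) (fun k => f k x')
        (fun k => hf k x x' hx) n d hn

theorem var_rel : ∀ {Γ σ} (v : Var Γ σ) (γ : (ℕ → ℕ) → Env Γ) (γ' : DEnv Γ),
    TREnv Γ γ γ' → TRel σ (fun α => v.eval (γ α)) (v.dial γ')
  | _, _, .vz, γ, γ', h => h.1
  | _, _, .vs v, γ, γ', h => var_rel v (fun α => (γ α).2) γ'.2 h.2

theorem tm_rel : ∀ {Γ σ} (t : Tm Γ σ) (γ : (ℕ → ℕ) → Env Γ) (γ' : DEnv Γ),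
    TREnv Γ γ γ' → TRel σ (fun α => t.eval (γ α)) (t.dial γ')
  | _, _, .var v, γ, γ', h => var_rel v γ γ' h
  | _, _, .zero, γ, γ', h => fun _ => rfl
  | _, _, .succ t, γ, γ', h => by
      intro α
      show (t.eval (γ α)).succ = dialogue (kleisli _ (t.dial γ')) α
      erw [dialogue_kleisli, ← tm_rel t γ γ' h α]
      rfl
  | _, _, .recn f x n, γ, γ', h => by
      refine gk_rel _ (fun α k => natrec (f.eval (γ α)) (x.eval (γ α)) k) _ ?_
        (fun α => n.eval (γ α)) (n.dial γ') (tm_rel n γ γ' h)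
      intro k
      induction k with
      | zero => exact tm_rel x γ γ' h
      | succ k ih =>
          exact tm_rel f γ γ' h (fun _ => k) (.eta k) (fun _ => rfl) _ _ ih
  | _, _, .lam t, γ, γ', h => fun x x' hx =>
      tm_rel t (fun α => (x α, γ α)) (x', γ') ⟨hx, h⟩
  | _, _, .app t u, γ, γ', h =>
      tm_rel t γ γ' h _ _ (tm_rel u γ γ' h)

theorem generic_rel : TRel (.arr .iota .iota) (fun α => α) generic := by
  intro x x' hx α
  show α (x α) = dialogue (kleisli _ x') α
  erw [dialogue_kleisli, ← hx α]
  rfl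

theorem dialogue_continuous (d : Dialogue ℕ ℕ ℕ) :
    ∀ α : ℕ → ℕ, ∃ m : ℕ, ∀ β : ℕ → ℕ,
      (∀ k < m, α k = β k) → dialogue d α = dialogue d β := by
  induction d with
  | eta x => exact fun α => ⟨0, fun β _ => rfl⟩
  | beta φ i ih =>
      intro α
      obtain ⟨m, hm⟩ := ih (α i) α
      refine ⟨max (i + 1) m, fun β hβ => ?_⟩
      have hi : β i = α i := (hβ i (lt_of_lt_of_le (Nat.lt_succ_self i) (le_max_left _ _))).symm
      show dialogue (φ (α i)) α = dialogue (φ (β i)) β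
      rw [hi]
      exact hm β (fun k hk => hβ k (lt_of_lt_of_le hk (le_max_right _ _)))

theorem systemT_continuous (t : Tm [] (.arr (.arr .iota .iota) .iota)) :
    ∀ α : ℕ → ℕ, ∃ m : ℕ, ∀ β : ℕ → ℕ,
      (∀ k < m, α k = β k) → Tm.eval t () α = Tm.eval t () β := by
  intro α
  have h := tm_rel t (fun _ => ()) () trivial (fun α => α) generic generic_rel
  obtain ⟨m, hm⟩ := dialogue_continuous (Tm.dial t () generic) α
  exact ⟨m, fun β hβ => (h α).trans ((hm β hβ).trans (h β).symm)⟩
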